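/- arXiv:2406.13422 — 10 statements merged into one kernel-verified Lean document; each statement's English description precedes it below -/
import Mathlib

section
/- Let L be a Lie algebra and δ an invertible derivation on L. Then δ²[x,y] = [δx, δy] for all x,y ∈ L if and only if δ⁻¹ is also a derivation on L. -/
variable {K : Type*} [Field K] [CharZero K]
variable {L : Type*} [LieRing L] [LieAlgebra K L]

/-- Let `L` be a Lie algebra and `δ` an invertible derivation on `L`.
Then `δ²⁅x,y⁆ = ⁅δx, δy⁆` for all `x y` iff `δ⁻¹` is also a derivation. -/
theorem invDerivation_iff (δ : L ≃ₗ[K] L)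
    (hδ : ∀ x y : L, δ ⁅x, y⁆ = ⁅δ x, y⁆ + ⁅x, δ y⁆) :
    (∀ x y : L, δ (δ ⁅x, y⁆) = ⁅δ x, δ y⁆) ↔
      (∀ x y : L, δ.symm ⁅x, y⁆ = ⁅δ.symm x, y⁆ + ⁅x, δ.symm y⁆) := by
  constructor
  · intro h x y
    have h1 := h (δ.symm x) (δ.symm y)
    rw [hδ, δ.apply_symm_apply, δ.apply_symm_apply] at h1
    have := congrArg δ.symm h1
    rw [δ.symm_apply_apply] at this
    rw [← this]
    abel
  · intro h x y
    have h1 := h (δ x) (δ y)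
    rw [δ.symm_apply_apply, δ.symm_apply_apply, add_comm, ← hδ] at h1
    have := congrArg δ h1
    rwa [δ.apply_symm_apply, eq_comm] at this
end

section
/- Let (L, [-,-]) be a Lie algebra and δ an Inv-derivation on L (an invertible derivation with δ⁻¹ also a derivation, equivalently δ²[x,y] = [δx,δy]). Then the twisted bracket [x,y]_δ := δ([x,y]) makes L into a Lie algebra. -/
variable {K : Type*} [Field K] [CharZero K]
variable {L : Type*} [LieRing L] [LieAlgebra K L]

/-- If `δ` is an Inv-derivation on a Lie algebra `L`, then the twisted bracket
`⁅x,y⁆_δ = δ ⁅x,y⁆` makes `L` into a Lie algebra: it is alternating,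
antisymmetric, and satisfies the Jacobi identity. -/
theorem twisted_bracket_lie (δ : L ≃ₗ[K] L)
    (hδ : ∀ x y : L, δ ⁅x, y⁆ = ⁅δ x, y⁆ + ⁅x, δ y⁆)
    (hInv : ∀ x y : L, δ (δ ⁅x, y⁆) = ⁅δ x, δ y⁆) :
    (∀ x : L, δ ⁅x, x⁆ = 0) ∧
    (∀ x y : L, δ ⁅x, y⁆ = - δ ⁅y, x⁆) ∧
    (∀ x y z : L,
      δ ⁅x, δ ⁅y, z⁆⁆ + δ ⁅y, δ ⁅z, x⁆⁆ + δ ⁅z, δ ⁅x, y⁆⁆ = 0) := by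
  refine ⟨fun x => by simp, fun x y => by rw [← lie_skew, map_neg], fun x y z => ?_⟩
  apply δ.injective
  simp only [map_add, map_zero, hInv]
  have h1 := hInv y z
  have h2 := hInv z x
  have h3 := hInv x y
  exact lie_jacobi _ _ _
end

section
/- Let L be a Lie algebra and δ an Inv-derivation on L. Then the cyclic sum over x,y,z of [x, [y,z]_δ] equals the cyclic sum of [δx, [y,z]] for all x,y,z ∈ L, where [y,z]_δ = δ[y,z]. -/
variable {K : Type*} [Field K] [CharZero K]
variable {L : Type*} [LieRing L] [LieAlgebra K L]

/-- For an Inv-derivation `δ` on a Lie algebra `L`, the cyclic sum of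
`⁅x, ⁅y,z⁆_δ⁆` equals the cyclic sum of `⁅δx, ⁅y,z⁆⁆`, where `⁅y,z⁆_δ = δ ⁅y,z⁆`. -/
theorem cyclic_twisted_eq_cyclic_delta (δ : L ≃ₗ[K] L)
    (hδ : ∀ x y : L, δ ⁅x, y⁆ = ⁅δ x, y⁆ + ⁅x, δ y⁆)
    (hInv : ∀ x y : L, δ (δ ⁅x, y⁆) = ⁅δ x, δ y⁆) :
    ∀ x y z : L,
      ⁅x, δ ⁅y, z⁆⁆ + ⁅y, δ ⁅z, x⁆⁆ + ⁅z, δ ⁅x, y⁆⁆ =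
        ⁅δ x, ⁅y, z⁆⁆ + ⁅δ y, ⁅z, x⁆⁆ + ⁅δ z, ⁅x, y⁆⁆ := by
  intro x y z
  set ε := δ.symm with hεdef
  have hsym : ∀ a : L, δ (ε a) = a := fun a => δ.apply_symm_apply a
  have hsym' : ∀ a : L, ε (δ a) = a := fun a => δ.symm_apply_apply a
  -- ⁅ε a, ε b⁆ = ε (ε ⁅a, b⁆)
  have hsq : ∀ a b : L, ⁅ε a, ε b⁆ = ε (ε ⁅a, b⁆) := by
    intro a b
    have h2 := hInv (ε a) (ε b)
    rw [hsym, hsym] at h2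
    apply δ.injective; apply δ.injective
    rw [hsym, hsym]
    exact h2
  -- the cyclic sum Σ ⁅a, δ⁅b,c⁆⁆ vanishes
  have hS2 : ∀ a b c : L, ⁅a, δ ⁅b, c⁆⁆ + ⁅b, δ ⁅c, a⁆⁆ + ⁅c, δ ⁅a, b⁆⁆ = 0 := by
    intro a b c
    have key : ∀ u v w : L,
        ⁅ε u, ε ⁅v, w⁆⁆ + ⁅ε v, ε ⁅w, u⁆⁆ + ⁅ε w, ε ⁅u, v⁆⁆ = 0 := by
      intro u v w
      rw [hsq u ⁅v, w⁆, hsq v ⁅w, u⁆, hsq w ⁅u, v⁆, ← map_add, ← map_add,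
        ← map_add, ← map_add, lie_jacobi, map_zero, map_zero]
    have hbr : ∀ p q : L, ε ⁅δ p, δ q⁆ = δ ⁅p, q⁆ := by
      intro p q; rw [← hInv, hsym']
    have := key (δ a) (δ b) (δ c)
    rwa [hsym', hsym', hsym', hbr, hbr, hbr] at this
  -- the cyclic sum Σ ⁅δa, ⁅b,c⁆⁆ also vanishes
  have hS1 : ⁅δ x, ⁅y, z⁆⁆ + ⁅δ y, ⁅z, x⁆⁆ + ⁅δ z, ⁅x, y⁆⁆ = 0 := by
    have J : δ ⁅x, ⁅y, z⁆⁆ + δ ⁅y, ⁅z, x⁆⁆ + δ ⁅z, ⁅x, y⁆⁆ = 0 := by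
      rw [← map_add, ← map_add, lie_jacobi, map_zero]
    rw [hδ x ⁅y, z⁆, hδ y ⁅z, x⁆, hδ z ⁅x, y⁆] at J
    have h2 := hS2 x y z
    linear_combination (norm := abel) J - h2
  rw [hS2 x y z, hS1]
end

section
/- Let L be a Lie algebra and δ an Inv-derivation on L. Then the twisted InvDer-Jacobi identity holds: the cyclic sum over x,y,z of [δx, [y,z]] equals zero for all x,y,z ∈ L. -/
variable {K : Type*} [Field K] [CharZero K]
variable {L : Type*} [LieRing L] [LieAlgebra K L]

/-- For an Inv-derivation `δ` on a Lie algebra `L`, the InvDer-Jacobi identity holds: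
the cyclic sum of `⁅δx, ⁅y,z⁆⁆` vanishes. -/
theorem invDer_jacobi (δ : L ≃ₗ[K] L)
    (hδ : ∀ x y : L, δ ⁅x, y⁆ = ⁅δ x, y⁆ + ⁅x, δ y⁆)
    (hInv : ∀ x y : L, δ (δ ⁅x, y⁆) = ⁅δ x, δ y⁆) :
    ∀ x y z : L, ⁅δ x, ⁅y, z⁆⁆ + ⁅δ y, ⁅z, x⁆⁆ + ⁅δ z, ⁅x, y⁆⁆ = 0 := by
  intro x y z
  -- First, the cyclic sum of ⁅x, δ⁅y,z⁆⁆ vanishes, by applying δ² and hInv.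
  have hA : ⁅x, δ ⁅y, z⁆⁆ + ⁅y, δ ⁅z, x⁆⁆ + ⁅z, δ ⁅x, y⁆⁆ = 0 := by
    apply δ.injective
    apply δ.injective
    rw [map_add, map_add, map_add, map_add, map_zero, map_zero,
      hInv x (δ ⁅y, z⁆), hInv y (δ ⁅z, x⁆), hInv z (δ ⁅x, y⁆),
      hInv y z, hInv z x, hInv x y]
    exact lie_jacobi (δ x) (δ y) (δ z)
  have hA' : (⁅x, ⁅δ y, z⁆⁆ + ⁅x, ⁅y, δ z⁆⁆) + (⁅y, ⁅δ z, x⁆⁆ + ⁅y, ⁅z, δ x⁆⁆)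
      + (⁅z, ⁅δ x, y⁆⁆ + ⁅z, ⁅x, δ y⁆⁆) = 0 := by
    rw [← lie_add, ← lie_add, ← lie_add, ← hδ y z, ← hδ z x, ← hδ x y]
    exact hA
  have j1 := lie_jacobi (δ x) y z
  have j2 := lie_jacobi x (δ y) z
  have j3 := lie_jacobi x y (δ z)
  calc ⁅δ x, ⁅y, z⁆⁆ + ⁅δ y, ⁅z, x⁆⁆ + ⁅δ z, ⁅x, y⁆⁆
      = ((⁅δ x, ⁅y, z⁆⁆ + ⁅y, ⁅z, δ x⁆⁆ + ⁅z, ⁅δ x, y⁆⁆)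
        + (⁅x, ⁅δ y, z⁆⁆ + ⁅δ y, ⁅z, x⁆⁆ + ⁅z, ⁅x, δ y⁆⁆)
        + (⁅x, ⁅y, δ z⁆⁆ + ⁅y, ⁅δ z, x⁆⁆ + ⁅δ z, ⁅x, y⁆⁆))
        - ((⁅x, ⁅δ y, z⁆⁆ + ⁅x, ⁅y, δ z⁆⁆) + (⁅y, ⁅δ z, x⁆⁆ + ⁅y, ⁅z, δ x⁆⁆)
        + (⁅z, ⁅δ x, y⁆⁆ + ⁅z, ⁅x, δ y⁆⁆)) := by abel
    _ = 0 := by rw [j1, j2, j3, hA']; simp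
end

section
/- Let (V; ρ, δ_V) be a representation of an InvDer Lie algebra (L, δ). Define on L ⊕ V the bracket [x+a, y+b]_⋉ = [x,y] + ρ(x)(b) − ρ(y)(a) and the map (δ⊕δ_V)(x+a) = δx + δ_V a. Then δ⊕δ_V is a derivation of (L⊕V, [-,-]_⋉). -/
variable {K : Type*} [Field K] [CharZero K]
variable {L : Type*} [LieRing L] [LieAlgebra K L]
variable {V : Type*} [AddCommGroup V] [Module K V]

/-- Let `(V; ρ, δ_V)` be a representation of an InvDer Lie algebra `(L, δ)`.
Then `δ ⊕ δ_V` is a derivation of `L ⊕ V` with the semidirect product bracket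
`⁅x+a, y+b⁆_⋉ = ⁅x,y⁆ + ρ(x)b − ρ(y)a`. -/
theorem semidirect_derivation (δ : L ≃ₗ[K] L)
    (hδ : ∀ x y : L, δ ⁅x, y⁆ = ⁅δ x, y⁆ + ⁅x, δ y⁆)
    (hInv : ∀ x y : L, δ (δ ⁅x, y⁆) = ⁅δ x, δ y⁆)
    (ρ : L →ₗ[K] Module.End K V) (δV : V ≃ₗ[K] V)
    (h1 : ∀ (x : L) (v : V), ρ (δ x) (δV v) = δV (δV (ρ x v)))
    (h2 : ∀ (x y : L) (v : V),
      ρ ⁅x, y⁆ (δV v) = ρ (δ x) (ρ y v) - ρ (δ y) (ρ x v))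
    (h3 : ∀ (x : L) (v : V), δV (ρ x v) = ρ (δ x) v + ρ x (δV v)) :
    ∀ (x y : L) (a b : V),
      (((δ ⁅x, y⁆ : L), δV (ρ x b - ρ y a)) : L × V) =
        ((⁅δ x, y⁆, ρ (δ x) b - ρ y (δV a)) : L × V) +
          ((⁅x, δ y⁆, ρ x (δV b) - ρ (δ y) a) : L × V) := by
  intro x y a b
  ext
  · exact hδ x y
  · simp only [Prod.snd_add, map_sub, h3]
    abel
end

section
/- Let (V; ρ, δ_V) be a representation of an InvDer Lie algebra (L, δ). Then on the semidirect product L ⊕ V with bracket [x+a, y+b]_⋉ = [x,y] + ρ(x)(b) − ρ(y)(a), the map δ⊕δ_V satisfies (δ⊕δ_V)²[u,v]_⋉ = [(δ⊕δ_V)u, (δ⊕δ_V)v]_⋉ for all u,v ∈ L⊕V; hence (L⊕V, [-,-]_⋉, δ⊕δ_V) is an InvDer Lie algebra. -/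
variable {K : Type*} [Field K] [CharZero K]
variable {L : Type*} [LieRing L] [LieAlgebra K L]
variable {V : Type*} [AddCommGroup V] [Module K V]

/-- Let `(V; ρ, δ_V)` be a representation of an InvDer Lie algebra `(L, δ)`.
Then on the semidirect product `L ⊕ V` with bracket
`⁅x+a, y+b⁆_⋉ = ⁅x,y⁆ + ρ(x)b − ρ(y)a`, the map `δ ⊕ δ_V` satisfies
`(δ⊕δ_V)²⁅u,v⁆_⋉ = ⁅(δ⊕δ_V)u, (δ⊕δ_V)v⁆_⋉`; hence `(L⊕V, ⁅-,-⁆_⋉, δ⊕δ_V)`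
is an InvDer Lie algebra (the bracket is alternating, satisfies the Jacobi
identity, `δ⊕δ_V` is a derivation for it, and the squared-twist identity holds). -/
theorem semidirect_invDer_lie (δ : L ≃ₗ[K] L)
    (hδ : ∀ x y : L, δ ⁅x, y⁆ = ⁅δ x, y⁆ + ⁅x, δ y⁆)
    (hInv : ∀ x y : L, δ (δ ⁅x, y⁆) = ⁅δ x, δ y⁆)
    (ρ : L →ₗ[K] Module.End K V) (δV : V ≃ₗ[K] V)
    (h1 : ∀ (x : L) (v : V), ρ (δ x) (δV v) = δV (δV (ρ x v)))
    (h2 : ∀ (x y : L) (v : V),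
      ρ ⁅x, y⁆ (δV v) = ρ (δ x) (ρ y v) - ρ (δ y) (ρ x v))
    (h3 : ∀ (x : L) (v : V), δV (ρ x v) = ρ (δ x) v + ρ x (δV v)) :
    (∀ (x y : L) (a b : V),
      (((δ (δ ⁅x, y⁆) : L), δV (δV (ρ x b - ρ y a))) : L × V) =
        ((⁅δ x, δ y⁆, ρ (δ x) (δV b) - ρ (δ y) (δV a)) : L × V)) ∧
    (∀ (x : L) (a : V), (((⁅x, x⁆ : L), ρ x a - ρ x a) : L × V) = 0) ∧
    (∀ (x y z : L) (a b c : V),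
      (((⁅x, ⁅y, z⁆⁆ + ⁅y, ⁅z, x⁆⁆ + ⁅z, ⁅x, y⁆⁆ : L),
          (ρ x (ρ y c - ρ z b) - ρ ⁅y, z⁆ a) +
            (ρ y (ρ z a - ρ x c) - ρ ⁅z, x⁆ b) +
            (ρ z (ρ x b - ρ y a) - ρ ⁅x, y⁆ c)) : L × V) = 0) ∧
    (∀ (x y : L) (a b : V),
      (((δ ⁅x, y⁆ : L), δV (ρ x b - ρ y a)) : L × V) =
        ((⁅δ x, y⁆, ρ (δ x) b - ρ y (δV a)) : L × V) +
          ((⁅x, δ y⁆, ρ x (δV b) - ρ (δ y) a) : L × V)) := by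
  have rep : ∀ (x y : L) (s : V), ρ ⁅x, y⁆ s = ρ x (ρ y s) - ρ y (ρ x s) := by
    intro x y s
    have E := h2 (δ x) (δ y) (δV s)
    rw [← hInv x y, h1 y s, h1 x s, h1 (δ ⁅x, y⁆) (δV s), h1 ⁅x, y⁆ s,
        h1 (δ x) (δV (ρ y s)), h1 x (ρ y s), h1 (δ y) (δV (ρ x s)), h1 y (ρ x s)] at E
    have E' : δV (δV (δV (δV (ρ ⁅x, y⁆ s)))) =
        δV (δV (δV (δV (ρ x (ρ y s) - ρ y (ρ x s))))) := by
      rw [map_sub, map_sub, map_sub, map_sub]; exact E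
    exact δV.injective (δV.injective (δV.injective (δV.injective E')))
  refine ⟨?_, ?_, ?_, ?_⟩
  · intro x y a b
    refine Prod.ext (hInv x y) ?_
    simp only [map_sub, ← h1]
  · intro x a
    simp [Prod.ext_iff]
  · intro x y z a b c
    refine Prod.ext ?_ ?_
    · simpa using lie_jacobi x y z
    · simp only [rep, map_sub, Prod.snd_zero]
      abel
  · intro x y a b
    refine Prod.ext ?_ ?_
    · simpa using hδ x y
    · simp only [Prod.snd_add, map_sub, h3]
      abel
end

section
/- Let (L, [-,-], δ) be an InvDer Lie algebra and x ∈ L a fixed point of δ (δx = x). Then the map ad_x(y) = [y,x] is a δ-derivation: ad_x(δy) = δ²(ad_x(y)) and ad_x([y,z]) = [ad_x(y), δz] + [δy, ad_x(z)] for all y,z ∈ L. -/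
variable {K : Type*} [Field K] [CharZero K]
variable {L : Type*} [LieRing L] [LieAlgebra K L]

/-- Jacobi identity in the form `⁅⁅a,b⁆,c⁆ = ⁅⁅a,c⁆,b⁆ + ⁅a,⁅b,c⁆⁆`. -/
theorem adx_jac_aux (a b c : L) : ⁅⁅a, b⁆, c⁆ = ⁅⁅a, c⁆, b⁆ + ⁅a, ⁅b, c⁆⁆ := by
  rw [lie_lie, sub_eq_add_neg, lie_skew]
  abel

/-- Let `(L, ⁅-,-⁆, δ)` be an InvDer Lie algebra and `x` a fixed point of `δ`.
Then `ad_x(y) = ⁅y, x⁆` is a `δ`-derivation: `ad_x(δy) = δ²(ad_x y)` and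
`ad_x ⁅y,z⁆ = ⁅ad_x y, δz⁆ + ⁅δy, ad_x z⁆`. -/
theorem adx_delta_derivation (δ : L ≃ₗ[K] L)
    (hδ : ∀ x y : L, δ ⁅x, y⁆ = ⁅δ x, y⁆ + ⁅x, δ y⁆)
    (hInv : ∀ x y : L, δ (δ ⁅x, y⁆) = ⁅δ x, δ y⁆)
    (x : L) (hx : δ x = x) :
    (∀ y : L, ⁅δ y, x⁆ = δ (δ ⁅y, x⁆)) ∧
    (∀ y z : L, ⁅⁅y, z⁆, x⁆ = ⁅⁅y, x⁆, δ z⁆ + ⁅δ y, ⁅z, x⁆⁆) := by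
  constructor
  · intro y
    rw [hInv, hx]
  · have key : ∀ y z : L, ⁅δ ⁅y, z⁆, x⁆ = ⁅y, δ ⁅z, x⁆⁆ + ⁅δ ⁅y, x⁆, z⁆ := by
      intro y z
      have L1 : δ (δ ⁅δ ⁅y, z⁆, x⁆) = ⁅⁅δ y, δ z⁆, x⁆ := by
        rw [hInv, hInv, hx]
      have R1 : δ (δ ⁅y, δ ⁅z, x⁆⁆) = ⁅δ y, ⁅δ z, x⁆⁆ := by
        rw [hInv, hInv, hx]
      have R2 : δ (δ ⁅δ ⁅y, x⁆, z⁆) = ⁅⁅δ y, x⁆, δ z⁆ := by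
        rw [hInv, hInv, hx]
      apply δ.injective
      apply δ.injective
      rw [map_add, map_add, L1, R1, R2]
      rw [adx_jac_aux (δ y) (δ z) x]
      abel
    intro y z
    have hkey := key y z
    rw [hδ y z, hδ z x, hδ y x, hx] at hkey
    simp only [add_lie, lie_add] at hkey
    rw [adx_jac_aux (δ y) z x, adx_jac_aux y (δ z) x] at hkey
    rw [adx_jac_aux y z x]
    -- hkey : ⁅⁅δy,x⁆,z⁆ + ⁅δy,⁅z,x⁆⁆ + (⁅⁅y,x⁆,δz⁆ + ⁅y,⁅δz,x⁆⁆)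
    --        = ⁅y,⁅δz,x⁆⁆ + ⁅y,⁅z,x⁆⁆ + (⁅⁅δy,x⁆,z⁆ + ⁅⁅y,x⁆,z⁆)
    linear_combination (norm := abel) -hkey
end

section
/- Let (μ_t, δ_t) be a formal one-parameter deformation of an InvDer Lie algebra (L, [-,-], δ) with μ_t = Σ μ_i t^i, δ_t = Σ δ_i t^i, μ_0 = [-,-], δ_0 = δ. Then the linear coefficient triple (μ_1, δ_1, δ_1) is a 2-cocycle of (L, δ) with coefficients in the adjoint representation: ∂²_CE(μ_1) = 0, ∂¹_CE(δ_1) + Δ²(μ_1) = 0, and φ¹(δ_1) − Δ²_Inv(μ_1) = 0. -/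
variable {K : Type*} [Field K] [CharZero K]
variable {L : Type*} [LieRing L] [LieAlgebra K L]

open Finset in
/-- Let `(μ_t, δ_t)` be a formal one-parameter deformation of an InvDer Lie
algebra `(L, ⁅-,-⁆, δ)`, given degreewise by bilinear maps `μ n` and linear maps
`d n` with `μ 0 = ⁅-,-⁆`, `d 0 = δ`, satisfying the Jacobi, derivation and
squared-twist equations in each degree.  Then `(μ 1, d 1, d 1)` is a 2-cocycle of
`(L, δ)` with coefficients in the adjoint representation:
`∂²_CE(μ₁) = 0`, `∂¹_CE(δ₁) + Δ²(μ₁) = 0` and `φ¹(δ₁) − Δ²_Inv(μ₁) = 0`. -/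
theorem infinitesimal_is_two_cocycle (δ : L ≃ₗ[K] L)
    (hδ : ∀ x y : L, δ ⁅x, y⁆ = ⁅δ x, y⁆ + ⁅x, δ y⁆)
    (hInv : ∀ x y : L, δ (δ ⁅x, y⁆) = ⁅δ x, δ y⁆)
    (μ : ℕ → L →ₗ[K] L →ₗ[K] L) (d : ℕ → L →ₗ[K] L)
    (hμ0 : ∀ x y : L, μ 0 x y = ⁅x, y⁆)
    (hd0 : ∀ x : L, d 0 x = δ x)
    (hanti : ∀ (n : ℕ) (x y : L), μ n x y = - μ n y x)
    (hJ : ∀ (n : ℕ) (x y z : L),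
      ∑ i ∈ range (n + 1),
        (μ i x (μ (n - i) y z) + μ i y (μ (n - i) z x) +
          μ i z (μ (n - i) x y)) = 0)
    (hD : ∀ (n : ℕ) (x y : L),
      ∑ i ∈ range (n + 1),
        (d i (μ (n - i) x y) - μ i (d (n - i) x) y - μ i x (d (n - i) y)) = 0)
    (hS : ∀ (n : ℕ) (x y : L),
      ∑ i ∈ range (n + 1), ∑ j ∈ range (n + 1 - i),
        (d i (d j (μ (n - i - j) x y)) - μ i (d j x) (d (n - i - j) y)) = 0) :
    (∀ x y z : L,
      ⁅x, μ 1 y z⁆ - ⁅y, μ 1 x z⁆ + ⁅z, μ 1 x y⁆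
        - μ 1 ⁅x, y⁆ z + μ 1 ⁅x, z⁆ y - μ 1 ⁅y, z⁆ x = 0) ∧
    (∀ x y : L,
      (⁅x, d 1 y⁆ - ⁅y, d 1 x⁆ - d 1 ⁅x, y⁆) +
        (μ 1 (δ x) y + μ 1 x (δ y) - δ (μ 1 x y)) = 0) ∧
    (∀ x y : L,
      (δ (d 1 ⁅x, y⁆) + d 1 (δ ⁅x, y⁆) - ⁅δ x, d 1 y⁆ + ⁅δ y, d 1 x⁆) -
        (μ 1 (δ x) (δ y) - δ (δ (μ 1 x y))) = 0) := by

  refine ⟨?_, ?_, ?_⟩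
  · intro x y z
    have h := hJ 1 x y z
    simp only [Finset.sum_range_succ, Finset.sum_range_zero, Nat.sub_self,
      Nat.sub_zero, hμ0, zero_add] at h
    rw [hanti 1 x z, hanti 1 ⁅x, y⁆ z, hanti 1 ⁅x, z⁆ y, hanti 1 ⁅y, z⁆ x,
      show ⁅x, z⁆ = -⁅z, x⁆ from (lie_skew x z).symm]
    simp only [map_neg, lie_neg, neg_neg]
    calc ⁅x, μ 1 y z⁆ - -⁅y, μ 1 z x⁆ + ⁅z, μ 1 x y⁆ - -μ 1 z ⁅x, y⁆ +
          μ 1 y ⁅z, x⁆ - -μ 1 x ⁅y, z⁆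
        = ⁅x, μ 1 y z⁆ + ⁅y, μ 1 z x⁆ + ⁅z, μ 1 x y⁆ +
          (μ 1 x ⁅y, z⁆ + μ 1 y ⁅z, x⁆ + μ 1 z ⁅x, y⁆) := by abel
      _ = 0 := h
  · intro x y
    have h := hD 1 x y
    simp only [Finset.sum_range_succ, Finset.sum_range_zero, Nat.sub_self,
      Nat.sub_zero, hμ0, hd0, zero_add] at h
    rw [show ⁅y, d 1 x⁆ = -⁅d 1 x, y⁆ from (lie_skew _ _).symm]
    calc ⁅x, d 1 y⁆ - -⁅d 1 x, y⁆ - d 1 ⁅x, y⁆ +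
          (μ 1 (δ x) y + μ 1 x (δ y) - δ (μ 1 x y))
        = -(δ (μ 1 x y) - ⁅d 1 x, y⁆ - ⁅x, d 1 y⁆ +
            (d 1 ⁅x, y⁆ - μ 1 (δ x) y - μ 1 x (δ y))) := by abel
      _ = 0 := by rw [h, neg_zero]
  · intro x y
    have h := hS 1 x y
    simp only [Finset.sum_range_succ, Finset.sum_range_zero, Nat.sub_self,
      Nat.sub_zero, hμ0, hd0, zero_add] at h
    rw [show ⁅δ y, d 1 x⁆ = -⁅d 1 x, δ y⁆ from (lie_skew _ _).symm]
    calc δ (d 1 ⁅x, y⁆) + d 1 (δ ⁅x, y⁆) - ⁅δ x, d 1 y⁆ + -⁅d 1 x, δ y⁆ -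
          (μ 1 (δ x) (δ y) - δ (δ (μ 1 x y)))
        = (δ (δ (μ 1 x y)) - ⁅δ x, d 1 y⁆ +
            (δ (d 1 ⁅x, y⁆) - ⁅d 1 x, δ y⁆) +
            (d 1 (δ ⁅x, y⁆) - μ 1 (δ x) (δ y))) := by abel
      _ = 0 := h
end

section
/- Let (L, δ) be an InvDer Lie algebra and (V, δ_V) an abelian InvDer Lie algebra. Given linear maps γ: L∧L → V and χ: L → V, the bracket [x+u, y+v]_γ = [x,y] + γ(x,y) and the map δ_χ(x+u) = δx + χ(x) + δ_V u make L⊕V an InvDer Lie algebra if and only if: (1) γ([x,y],z) + γ([y,z],x) + γ([z,x],y) = 0, (2) χ([x,y]) + δ_V γ(x,y) − γ(δx,y) − γ(x,δy) = 0, and (3) χ(δ[x,y]) + δ_V χ([x,y]) + δ_V² γ(x,y) − γ(δx,δy) = 0, for all x,y,z ∈ L. -/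
variable {K : Type*} [Field K] [CharZero K]
variable {L : Type*} [LieRing L] [LieAlgebra K L]
variable {V : Type*} [AddCommGroup V] [Module K V]

/-- Let `(L, δ)` be an InvDer Lie algebra and `(V, δ_V)` an abelian InvDer Lie
algebra.  Given `γ : L ∧ L → V` and `χ : L → V`, the bracket
`⁅x+u, y+v⁆_γ = ⁅x,y⁆ + γ(x,y)` and the map `δ_χ(x+u) = δx + χ(x) + δ_V u`
make `L ⊕ V` an InvDer Lie algebra (alternating bracket, Jacobi identity,
`δ_χ` an invertible derivation, and the squared-twist identity) if and only if
`(γ, χ, χ)` is a 2-cocycle with trivial coefficients, i.e. the three equations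
(1), (2), (3) hold. -/
theorem central_extension_cocycle_iff (δ : L ≃ₗ[K] L)
    (hδ : ∀ x y : L, δ ⁅x, y⁆ = ⁅δ x, y⁆ + ⁅x, δ y⁆)
    (hInv : ∀ x y : L, δ (δ ⁅x, y⁆) = ⁅δ x, δ y⁆)
    (δV : V ≃ₗ[K] V)
    (γ : L →ₗ[K] L →ₗ[K] V) (hγ : ∀ x : L, γ x x = 0)
    (χ : L →ₗ[K] V) :
    ((∀ x : L, (((⁅x, x⁆ : L), γ x x) : L × V) = 0) ∧
     (∀ x y z : L,
        (((⁅x, ⁅y, z⁆⁆ + ⁅y, ⁅z, x⁆⁆ + ⁅z, ⁅x, y⁆⁆ : L),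
            γ x ⁅y, z⁆ + γ y ⁅z, x⁆ + γ z ⁅x, y⁆) : L × V) = 0) ∧
     (∀ x y : L,
        (((δ ⁅x, y⁆ : L), χ ⁅x, y⁆ + δV (γ x y)) : L × V) =
          ((⁅δ x, y⁆, γ (δ x) y) : L × V) + ((⁅x, δ y⁆, γ x (δ y)) : L × V)) ∧
     (∀ x y : L,
        (((δ (δ ⁅x, y⁆) : L), χ (δ ⁅x, y⁆) + δV (χ ⁅x, y⁆ + δV (γ x y))) : L × V) =
          ((⁅δ x, δ y⁆, γ (δ x) (δ y)) : L × V)) ∧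
     Function.Bijective (fun p : L × V => (((δ p.1 : L), χ p.1 + δV p.2) : L × V)))
      ↔
    ((∀ x y z : L, γ ⁅x, y⁆ z + γ ⁅y, z⁆ x + γ ⁅z, x⁆ y = 0) ∧
     (∀ x y : L, χ ⁅x, y⁆ + δV (γ x y) - γ (δ x) y - γ x (δ y) = 0) ∧
     (∀ x y : L,
        χ (δ ⁅x, y⁆) + δV (χ ⁅x, y⁆) + δV (δV (γ x y)) - γ (δ x) (δ y) = 0)) := by
  have hsk : ∀ x y : L, γ x y = - γ y x := by
    intro x y
    have h := hγ (x + y)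
    simp only [map_add, LinearMap.add_apply, hγ, zero_add, add_zero] at h
    have h' : γ x y + γ y x = 0 := by rw [add_comm]; exact h
    exact eq_neg_of_add_eq_zero_left h'
  have hbij : Function.Bijective
      (fun p : L × V => (((δ p.1 : L), χ p.1 + δV p.2) : L × V)) := by
    apply Function.bijective_iff_has_inverse.mpr
    refine ⟨fun q => (δ.symm q.1, δV.symm (q.2 - χ (δ.symm q.1))), ?_, ?_⟩
    · rintro ⟨x, u⟩; simp
    · rintro ⟨y, v⟩; simp
  constructor
  · rintro ⟨-, hjac, h2, h3, -⟩
    refine ⟨?_, ?_, ?_⟩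
    · intro x y z
      have h : γ x ⁅y, z⁆ + γ y ⁅z, x⁆ + γ z ⁅x, y⁆ = 0 := (Prod.ext_iff.mp (hjac x y z)).2
      rw [hsk ⁅x, y⁆ z, hsk ⁅y, z⁆ x, hsk ⁅z, x⁆ y,
        show -(γ z ⁅x, y⁆) + -(γ x ⁅y, z⁆) + -(γ y ⁅z, x⁆)
          = -(γ x ⁅y, z⁆ + γ y ⁅z, x⁆ + γ z ⁅x, y⁆) from by abel, h, neg_zero]
    · intro x y
      have hv : χ ⁅x, y⁆ + δV (γ x y) = γ (δ x) y + γ x (δ y) := (Prod.ext_iff.mp (h2 x y)).2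
      rw [hv]; abel
    · intro x y
      have hv : χ (δ ⁅x, y⁆) + δV (χ ⁅x, y⁆ + δV (γ x y)) = γ (δ x) (δ y) :=
        (Prod.ext_iff.mp (h3 x y)).2
      rw [map_add] at hv
      rw [sub_eq_zero, add_assoc]; exact hv
  · rintro ⟨c1, c2, c3⟩
    refine ⟨?_, ?_, ?_, ?_, hbij⟩
    · intro x; simp [hγ]
    · intro x y z
      rw [Prod.ext_iff]
      refine ⟨by simp [lie_jacobi], ?_⟩
      have h := c1 x y z
      show γ x ⁅y, z⁆ + γ y ⁅z, x⁆ + γ z ⁅x, y⁆ = 0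
      rw [hsk x ⁅y, z⁆, hsk y ⁅z, x⁆, hsk z ⁅x, y⁆,
        show -(γ ⁅y, z⁆ x) + -(γ ⁅z, x⁆ y) + -(γ ⁅x, y⁆ z)
          = -(γ ⁅x, y⁆ z + γ ⁅y, z⁆ x + γ ⁅z, x⁆ y) from by abel, h, neg_zero]
    · intro x y
      rw [Prod.ext_iff]
      refine ⟨by simpa using hδ x y, ?_⟩
      have h := c2 x y
      rw [sub_sub, sub_eq_zero] at h
      simpa using h
    · intro x y
      rw [Prod.ext_iff]
      refine ⟨by simpa using hInv x y, ?_⟩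
      have h := c3 x y
      rw [sub_eq_zero] at h
      show χ (δ ⁅x, y⁆) + δV (χ ⁅x, y⁆ + δV (γ x y)) = γ (δ x) (δ y)
      rw [map_add, ← add_assoc]; exact h
end

section
/- Let (L̂, δ̂) be a central extension of an InvDer Lie algebra (L, δ) by an abelian InvDer Lie algebra (V, δ_V), with projection p: L̂ → L, and let s₁, s₂: L → L̂ be two sections (p∘sᵢ = Id). Let (γᵢ, χᵢ) be the associated 2-cocycles: γᵢ(x,y) = [sᵢ(x), sᵢ(y)] − sᵢ[x,y], χᵢ(x) = δ̂ sᵢ(x) − sᵢ(δx). Then with Φ = s₁ − s₂ (which takes values in V), one has γ₁(x,y) = γ₂(x,y) − Φ([x,y]) and χ₁(x) = χ₂(x) + δ_V(Φ(x)) − Φ(δx); hence (γ₁,χ₁,χ₁) and (γ₂,χ₂,χ₂) differ by the coboundary 𝔇¹_InvDer(Φ). -/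
variable {K : Type*} [Field K] [CharZero K]
variable {L : Type*} [LieRing L] [LieAlgebra K L]
variable {Lhat : Type*} [LieRing Lhat] [LieAlgebra K Lhat]
variable {V : Type*} [AddCommGroup V] [Module K V]

/-- Let `(L̂, δ̂)` be a central extension of an InvDer Lie algebra `(L, δ)` by an
abelian InvDer Lie algebra `(V, δ_V)`, and let `s₁, s₂` be two sections.  With
`Φ = s₁ − s₂` (which takes values in `V`), the associated 2-cocycles satisfy
`γ₁(x,y) = γ₂(x,y) − Φ(⁅x,y⁆)` and `χ₁(x) = χ₂(x) + δ_V(Φ(x)) − Φ(δx)`;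
hence `(γ₁,χ₁,χ₁)` and `(γ₂,χ₂,χ₂)` differ by the coboundary `𝔇¹_InvDer(Φ)`. -/
theorem cocycle_independent_of_section (δ : L ≃ₗ[K] L)
    (hδ : ∀ x y : L, δ ⁅x, y⁆ = ⁅δ x, y⁆ + ⁅x, δ y⁆)
    (hInv : ∀ x y : L, δ (δ ⁅x, y⁆) = ⁅δ x, δ y⁆)
    (δV : V ≃ₗ[K] V) (δhat : Lhat ≃ₗ[K] Lhat)
    (hδhat : ∀ a b : Lhat, δhat ⁅a, b⁆ = ⁅δhat a, b⁆ + ⁅a, δhat b⁆)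
    (hδhatInv : ∀ a b : Lhat, δhat (δhat ⁅a, b⁆) = ⁅δhat a, δhat b⁆)
    (i : V →ₗ[K] Lhat) (p : Lhat →ₗ[K] L)
    (hp : ∀ a b : Lhat, p ⁅a, b⁆ = ⁅p a, p b⁆)
    (hiInj : Function.Injective i) (hpSurj : Function.Surjective p)
    (hexact : ∀ a : Lhat, p a = 0 ↔ a ∈ LinearMap.range i)
    (hcentral : ∀ (u : V) (a : Lhat), ⁅i u, a⁆ = 0)
    (hδi : ∀ u : V, δhat (i u) = i (δV u))
    (hpδ : ∀ a : Lhat, p (δhat a) = δ (p a))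
    (s₁ s₂ : L →ₗ[K] Lhat)
    (hs₁ : ∀ x : L, p (s₁ x) = x) (hs₂ : ∀ x : L, p (s₂ x) = x)
    (Φ : L → V) (hΦ : ∀ x : L, i (Φ x) = s₁ x - s₂ x) :
    (∀ x y : L,
      ⁅s₁ x, s₁ y⁆ - s₁ ⁅x, y⁆ =
        (⁅s₂ x, s₂ y⁆ - s₂ ⁅x, y⁆) - i (Φ ⁅x, y⁆)) ∧
    (∀ x : L,
      δhat (s₁ x) - s₁ (δ x) =
        (δhat (s₂ x) - s₂ (δ x)) + i (δV (Φ x)) - i (Φ (δ x))) := by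
  constructor
  · intro x y
    have h1 : s₁ x = s₂ x + i (Φ x) := by
      have := hΦ x; rw [this]; abel
    have h2 : s₁ y = s₂ y + i (Φ y) := by
      have := hΦ y; rw [this]; abel
    have hxy : s₁ ⁅x, y⁆ = s₂ ⁅x, y⁆ + i (Φ ⁅x, y⁆) := by
      have := hΦ ⁅x, y⁆; rw [this]; abel
    rw [h1, h2, hxy]
    rw [lie_add, add_lie, add_lie, hcentral, hcentral]
    have : ⁅s₂ x, i (Φ y)⁆ = 0 := by
      rw [← lie_skew, hcentral, neg_zero]
    rw [this]
    abel
  · intro x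
    have h1 : s₁ x = s₂ x + i (Φ x) := by
      have := hΦ x; rw [this]; abel
    have hdx : s₁ (δ x) = s₂ (δ x) + i (Φ (δ x)) := by
      have := hΦ (δ x); rw [this]; abel
    rw [h1, hdx, map_add, hδi]
    abel
end
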